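/- The category OGraph of open-graphs has unique strong epi–mono factorizations: every morphism f factors as a monomorphism composed with a strong epimorphism, uniquely up to isomorphism. -/

import Mathlib

open CategoryTheory Limits

/-! Directed graphs as `E ⇉ P` data, the type graph `2_G`, the slice category of
`2_G`-typed graphs, and the category `OGraph` of open-graphs. -/

structure PreGraph : Type 1 where
  E : Type
  P : Type
  s : E → P
  t : E → P

/-- The points of the type graph `2_G`: vertices `V` and edge-points `ε`. -/
inductive TyP : Type
  | V : TyP
  | eps : TyP
  deriving DecidableEq

/-- The edges of the type graph `2_G`: `V → ε`, `ε → V` and the loop on `ε`. -/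
inductive TyE : Type
  | ve : TyE
  | ev : TyE
  | loop : TyE
  deriving DecidableEq

/-- The type graph `2_G`. -/
def twoG : PreGraph where
  E := TyE
  P := TyP
  s e := match e with | .ve => .V | .ev => .eps | .loop => .eps
  t e := match e with | .ve => .eps | .ev => .V | .loop => .eps

structure GraphHom (G H : PreGraph) : Type where
  pe : G.E → H.E
  pp : G.P → H.P
  hs : ∀ e, H.s (pe e) = pp (G.s e)
  ht : ∀ e, H.t (pe e) = pp (G.t e)

def GraphHom.idHom (G : PreGraph) : GraphHom G G :=
  ⟨fun e => e, fun p => p, fun _ => rfl, fun _ => rfl⟩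

def GraphHom.comp {G H K : PreGraph} (f : GraphHom G H) (g : GraphHom H K) :
    GraphHom G K :=
  ⟨fun e => g.pe (f.pe e), fun p => g.pp (f.pp p),
   fun e => by rw [g.hs, f.hs], fun e => by rw [g.ht, f.ht]⟩

/-- An object of the slice category `Graph/2_G`: a graph together with a typing
morphism into `2_G`. -/
structure TypedGraph : Type 1 where
  G : PreGraph
  τ : GraphHom G twoG

/-- A morphism of `2_G`-typed graphs: a graph morphism commuting with the typing. -/
@[ext]
structure TypedHom (X Y : TypedGraph) : Type where
  h : GraphHom X.G Y.G
  comm_pp : ∀ p, Y.τ.pp (h.pp p) = X.τ.pp p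
  comm_pe : ∀ e, Y.τ.pe (h.pe e) = X.τ.pe e

def TypedHom.idHom (X : TypedGraph) : TypedHom X X :=
  ⟨GraphHom.idHom X.G, fun _ => rfl, fun _ => rfl⟩

def TypedHom.comp {X Y Z : TypedGraph} (f : TypedHom X Y) (g : TypedHom Y Z) :
    TypedHom X Z :=
  ⟨f.h.comp g.h,
   fun p => by show Z.τ.pp (g.h.pp (f.h.pp p)) = _; rw [g.comm_pp, f.comm_pp],
   fun e => by show Z.τ.pe (g.h.pe (f.h.pe e)) = _; rw [g.comm_pe, f.comm_pe]⟩

instance : Category TypedGraph where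
  Hom := TypedHom
  id := TypedHom.idHom
  comp := TypedHom.comp
  id_comp _ := rfl
  comp_id _ := rfl
  assoc _ _ _ := rfl

/-- An open-graph: a `2_G`-typed graph in which every edge-point has at most one
in-edge and at most one out-edge. -/
structure OGraph : Type 1 where
  X : TypedGraph
  open_in : ∀ p, X.τ.pp p = TyP.eps →
    ∀ e₁ e₂, X.G.t e₁ = p → X.G.t e₂ = p → e₁ = e₂
  open_out : ∀ p, X.τ.pp p = TyP.eps →
    ∀ e₁ e₂, X.G.s e₁ = p → X.G.s e₂ = p → e₁ = e₂

/-- A typed-graph morphism is full on vertices when every edge adjacent to the image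
`f(v)` of a vertex `v` is the image of an edge adjacent to `v`. -/
def FullOnVertices {X Y : TypedGraph} (f : TypedHom X Y) : Prop :=
  ∀ v, X.τ.pp v = TyP.V → ∀ e, (Y.G.s e = f.h.pp v ∨ Y.G.t e = f.h.pp v) →
    ∃ e', f.h.pe e' = e ∧ (X.G.s e' = v ∨ X.G.t e' = v)

/-- A morphism of open-graphs: a typed-graph morphism that is full on vertices. -/
@[ext]
structure OHom (G H : OGraph) : Type where
  f : TypedHom G.X H.X
  full : FullOnVertices f

theorem fullOnVertices_id (G : OGraph) : FullOnVertices (TypedHom.idHom G.X) :=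
  fun _ _ e he => ⟨e, rfl, he⟩

theorem fullOnVertices_comp {G H K : OGraph} (f : TypedHom G.X H.X)
    (g : TypedHom H.X K.X) (hf : FullOnVertices f) (hg : FullOnVertices g) :
    FullOnVertices (f.comp g) := by
  intro v hv e he
  have hfv : H.X.τ.pp (f.h.pp v) = TyP.V := by rw [f.comm_pp]; exact hv
  obtain ⟨e', he', hadj'⟩ := hg (f.h.pp v) hfv e he
  obtain ⟨e'', he'', hadj''⟩ := hf v hv e' hadj'
  exact ⟨e'', by show g.h.pe (f.h.pe e'') = e; rw [he'', he'], hadj''⟩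

def OHom.idHom (G : OGraph) : OHom G G := ⟨TypedHom.idHom G.X, fullOnVertices_id G⟩

def OHom.comp {G H K : OGraph} (φ : OHom G H) (ψ : OHom H K) : OHom G K :=
  ⟨φ.f.comp ψ.f, fullOnVertices_comp φ.f ψ.f φ.full ψ.full⟩

instance : Category OGraph where
  Hom := OHom
  id := OHom.idHom
  comp := OHom.comp
  id_comp _ := rfl
  comp_id _ := rfl
  assoc _ _ _ := rfl

/-- The point map of an open-graph morphism. -/
def OHom.pp {G H : OGraph} (φ : OHom G H) : G.X.G.P → H.X.G.P := φ.f.h.pp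

/-- The edge map of an open-graph morphism. -/
def OHom.pe {G H : OGraph} (φ : OHom G H) : G.X.G.E → H.X.G.E := φ.f.h.pe

/-- The embedding functor `S : OGraph ⥤ Graph/2_G`. -/
def S : OGraph ⥤ TypedGraph where
  obj G := G.X
  map f := f.f
  map_id _ := rfl
  map_comp _ _ := rfl

/-- An edge-point of an open-graph. -/
def IsEdgePoint (G : OGraph) (p : G.X.G.P) : Prop := G.X.τ.pp p = TyP.eps

/-- An input: an edge-point with no in-edges. -/
def IsInput (G : OGraph) (p : G.X.G.P) : Prop :=
  IsEdgePoint G p ∧ ∀ e, G.X.G.t e ≠ p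

/-- An output: an edge-point with no out-edges. -/
def IsOutput (G : OGraph) (p : G.X.G.P) : Prop :=
  IsEdgePoint G p ∧ ∀ e, G.X.G.s e ≠ p

/-- The boundary graph of `G`: the point graph `In(G) + Out(G)`. -/
def boundaryGraph (G : OGraph) : OGraph where
  X := { G := { E := Empty
                P := {p // IsInput G p} ⊕ {p // IsOutput G p}
                s := fun e => e.elim
                t := fun e => e.elim }
         τ := { pe := fun e => e.elim
                pp := fun _ => TyP.eps
                hs := fun e => e.elim
                ht := fun e => e.elim } }
  open_in := fun _ _ e => e.elim
  open_out := fun _ _ e => e.elim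

/-- The boundary map `b : In(G) + Out(G) ⟶ G`. -/
def boundaryMap (G : OGraph) : boundaryGraph G ⟶ G :=
  OHom.mk
    (TypedHom.mk
      (GraphHom.mk (fun e => e.elim)
        (fun p => Sum.elim (fun q => q.val) (fun q => q.val) p)
        (fun e => e.elim) (fun e => e.elim))
      (by rintro (⟨p, hp⟩ | ⟨p, hp⟩) <;> exact hp.1)
      (fun e => e.elim))
    (by rintro (⟨p, hp⟩ | ⟨p, hp⟩) hv <;> exact absurd hv (by simp [boundaryGraph]))

/-- An isolated point: both an input and an output. -/
def IsIsolated (G : OGraph) (p : G.X.G.P) : Prop := IsInput G p ∧ IsOutput G p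

/-- A point graph: an open-graph consisting only of (isolated) edge-points. -/
def IsPointGraph (G : OGraph) : Prop :=
  (∀ p, IsEdgePoint G p) ∧ (G.X.G.E → False)

/-- A boundary-coherent span of open-graphs. -/
def BoundaryCoherent {G H₁ H₂ : OGraph} (f : G ⟶ H₁) (g : G ⟶ H₂) : Prop :=
  Mono f ∧ Mono g ∧
  (∀ p, IsInput G p → ¬(IsInput H₁ (OHom.pp f p) ∧ IsInput H₂ (OHom.pp g p))) ∧
  (∀ p, IsOutput G p → ¬(IsOutput H₁ (OHom.pp f p) ∧ IsOutput H₂ (OHom.pp g p)))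


/-!
A monomorphism of open-graphs is injective on points and on edges. Two edge-points identified by
a mono are separated by maps out of a single edge-point; two vertices are separated by maps out
of the star of their common image, which is needed because fullness forces a map hitting a
vertex to hit every edge around it. Edges follow from openness: every edge has an edge-point
endpoint, and no other edge leaves or enters that point on the same side.

Consequently a morphism `e` surjective on points and edges lifts against every mono `m`, by
`u ∘ e⁻¹`, which is well defined since `m` is injective. So the corestriction of `f` onto its
image, a sub-open-graph of the target, is a strong epimorphism, and the inclusion of the image is
a mono. Uniqueness up to isomorphism holds in any category, as a strong epi–mono factorisation
is an image.
-/

namespace TypedGraph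

theorem typeOf_s_eq_eps_or_typeOf_t_eq_eps (X : TypedGraph) (e : X.G.E) :
    X.τ.pp (X.G.s e) = .eps ∨ X.τ.pp (X.G.t e) = .eps := by
  rw [← X.τ.hs, ← X.τ.ht]
  cases X.τ.pe e <;> simp [twoG]

theorem typeOf_t_eq_eps {X : TypedGraph} {e : X.G.E} (h : X.τ.pp (X.G.s e) = .V) :
    X.τ.pp (X.G.t e) = .eps :=
  (X.typeOf_s_eq_eps_or_typeOf_t_eq_eps e).resolve_left (by simp [h])

theorem typeOf_s_eq_eps {X : TypedGraph} {e : X.G.E} (h : X.τ.pp (X.G.t e) = .V) :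
    X.τ.pp (X.G.s e) = .eps :=
  (X.typeOf_s_eq_eps_or_typeOf_t_eq_eps e).resolve_right (by simp [h])

end TypedGraph

namespace FullOnVertices

variable {X Y Z : TypedGraph} {e : TypedHom X Y} {m : TypedHom Y Z} {f : TypedHom X Z}

theorem of_comp_of_surjective (hf : FullOnVertices f)
    (hpe : ∀ a, m.h.pe (e.h.pe a) = f.h.pe a) (hpp : ∀ a, m.h.pp (e.h.pp a) = f.h.pp a)
    (he : Function.Surjective e.h.pp) : FullOnVertices m := by
  intro y hy d hd
  obtain ⟨x, rfl⟩ := he y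
  have hx : X.τ.pp x = .V := by rw [← e.comm_pp, hy]
  obtain ⟨d', rfl, hadj⟩ := hf x hx d (by rwa [← hpp])
  refine ⟨e.h.pe d', hpe d', ?_⟩
  rw [e.h.hs, e.h.ht]
  exact hadj.imp (congrArg e.h.pp) (congrArg e.h.pp)

theorem of_comp_of_injective (hf : FullOnVertices f)
    (hpe : ∀ a, m.h.pe (e.h.pe a) = f.h.pe a) (hpp : ∀ a, m.h.pp (e.h.pp a) = f.h.pp a)
    (hm : Function.Injective m.h.pe) : FullOnVertices e := by
  intro x hx d hd
  have hmd : Z.G.s (m.h.pe d) = f.h.pp x ∨ Z.G.t (m.h.pe d) = f.h.pp x := by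
    rw [m.h.hs, m.h.ht, ← hpp]
    exact hd.imp (congrArg _) (congrArg _)
  obtain ⟨d', hd', hadj⟩ := hf x hx _ hmd
  exact ⟨d', hm (by rw [hpe, hd']), hadj⟩

end FullOnVertices

namespace OHom

variable {G H : OGraph}

@[ext]
theorem hom_ext {φ ψ : G ⟶ H} (hpe : OHom.pe φ = OHom.pe ψ) (hpp : OHom.pp φ = OHom.pp ψ) :
    φ = ψ := by
  obtain ⟨⟨⟨_, _, _, _⟩, _, _⟩, _⟩ := φ
  obtain ⟨⟨⟨_, _, _, _⟩, _, _⟩, _⟩ := ψ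
  cases hpe
  cases hpp
  rfl

theorem typeOf_pp (φ : G ⟶ H) (p : G.X.G.P) : H.X.τ.pp (OHom.pp φ p) = G.X.τ.pp p :=
  φ.f.comm_pp p

theorem typeOf_pe (φ : G ⟶ H) (e : G.X.G.E) : H.X.τ.pe (OHom.pe φ e) = G.X.τ.pe e :=
  φ.f.comm_pe e

theorem s_pe (φ : G ⟶ H) (e : G.X.G.E) : H.X.G.s (OHom.pe φ e) = OHom.pp φ (G.X.G.s e) :=
  φ.f.h.hs e

theorem t_pe (φ : G ⟶ H) (e : G.X.G.E) : H.X.G.t (OHom.pe φ e) = OHom.pp φ (G.X.G.t e) :=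
  φ.f.h.ht e

theorem typeOf_eq_of_pp_eq (φ : G ⟶ H) {p₁ p₂ : G.X.G.P}
    (h : OHom.pp φ p₁ = OHom.pp φ p₂) :
    G.X.τ.pp p₁ = G.X.τ.pp p₂ := by
  rw [← typeOf_pp φ, h, typeOf_pp]

theorem full_at (φ : G ⟶ H) {v : G.X.G.P} (hv : G.X.τ.pp v = .V) {e : H.X.G.E}
    (he : H.X.G.s e = OHom.pp φ v ∨ H.X.G.t e = OHom.pp φ v) :
    ∃ d, OHom.pe φ d = e ∧ (G.X.G.s d = v ∨ G.X.G.t d = v) :=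
  φ.full v hv e he

theorem exists_pe_eq_of_s_eq (φ : G ⟶ H) {v : G.X.G.P} (hv : G.X.τ.pp v = .V)
    {e : H.X.G.E} (he : H.X.G.s e = OHom.pp φ v) :
    ∃ d, OHom.pe φ d = e ∧ G.X.G.s d = v := by
  obtain ⟨d, rfl, hd | hd⟩ := φ.full_at hv (.inl he)
  · exact ⟨d, rfl, hd⟩
  · have := typeOf_pp φ (G.X.G.s d)
    rw [← s_pe, he, typeOf_pp, hv, TypedGraph.typeOf_s_eq_eps (hd ▸ hv)] at this
    cases this

theorem exists_pe_eq_of_t_eq (φ : G ⟶ H) {v : G.X.G.P} (hv : G.X.τ.pp v = .V)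
    {e : H.X.G.E} (he : H.X.G.t e = OHom.pp φ v) :
    ∃ d, OHom.pe φ d = e ∧ G.X.G.t d = v := by
  obtain ⟨d, rfl, hd | hd⟩ := φ.full_at hv (.inr he)
  · have := typeOf_pp φ (G.X.G.t d)
    rw [← t_pe, he, typeOf_pp, hv, TypedGraph.typeOf_t_eq_eps (hd ▸ hv)] at this
    cases this
  · exact ⟨d, rfl, hd⟩

end OHom

def edgePointGraph : OGraph where
  X := { G := { E := Empty
                P := Unit
                s := Empty.elim
                t := Empty.elim }
         τ := { pe := Empty.elim
                pp := fun _ => .eps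
                hs := fun e => e.elim
                ht := fun e => e.elim } }
  open_in := fun _ _ e => e.elim
  open_out := fun _ _ e => e.elim

def edgePointGraph.hom {G : OGraph} (p : G.X.G.P) (hp : IsEdgePoint G p) :
    edgePointGraph ⟶ G :=
  ⟨⟨⟨Empty.elim, fun _ => p, fun e => e.elim, fun e => e.elim⟩, fun _ => hp,
    fun e => e.elim⟩,
    fun _ hv => nomatch hv⟩

/-- The star of a vertex `y`: the edges out of `y` (left) and into `y` (right), each with its own
copy (`some`) of its far endpoint; `none` is `y` itself. -/
def starGraph (Y : OGraph) (y : Y.X.G.P) (hy : Y.X.τ.pp y = .V) : OGraph where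
  X := { G := { E := {e // Y.X.G.s e = y} ⊕ {e // Y.X.G.t e = y}
                P := Option ({e // Y.X.G.s e = y} ⊕ {e // Y.X.G.t e = y})
                s := Sum.elim (fun _ => none) (fun e => some (.inr e))
                t := Sum.elim (fun e => some (.inl e)) (fun _ => none) }
         τ := { pe := Sum.elim (fun e => Y.X.τ.pe e.1) (fun e => Y.X.τ.pe e.1)
                pp := fun q => q.elim .V fun _ => .eps
                hs := by
                  rintro (⟨e, he⟩ | ⟨e, he⟩)
                  · exact (Y.X.τ.hs e).trans (he ▸ hy)
                  · exact (Y.X.τ.hs e).trans (TypedGraph.typeOf_s_eq_eps (he ▸ hy))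
                ht := by
                  rintro (⟨e, he⟩ | ⟨e, he⟩)
                  · exact (Y.X.τ.ht e).trans (TypedGraph.typeOf_t_eq_eps (he ▸ hy))
                  · exact (Y.X.τ.ht e).trans (he ▸ hy) } }
  open_in := by
    rintro q hq (e₁ | e₁) (e₂ | e₂) rfl ⟨⟩ <;> first | rfl | cases hq
  open_out := by
    rintro q hq (e₁ | e₁) (e₂ | e₂) rfl ⟨⟩ <;> first | rfl | cases hq

section StarLift

variable {X Y : OGraph} (φ : X ⟶ Y) {p : X.X.G.P} (hp : X.X.τ.pp p = .V) {y : Y.X.G.P}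
  (hpy : OHom.pp φ p = y)

noncomputable def starLiftEdge :
    {e // Y.X.G.s e = y} ⊕ {e // Y.X.G.t e = y} → X.X.G.E :=
  Sum.elim (fun e => (φ.exists_pe_eq_of_s_eq hp (e.2.trans hpy.symm)).choose)
    (fun e => (φ.exists_pe_eq_of_t_eq hp (e.2.trans hpy.symm)).choose)

theorem pe_starLiftEdge (e : {e // Y.X.G.s e = y} ⊕ {e // Y.X.G.t e = y}) :
    OHom.pe φ (starLiftEdge φ hp hpy e) = Sum.elim Subtype.val Subtype.val e := by
  rcases e with e | e
  · exact (φ.exists_pe_eq_of_s_eq hp (e.2.trans hpy.symm)).choose_spec.1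
  · exact (φ.exists_pe_eq_of_t_eq hp (e.2.trans hpy.symm)).choose_spec.1

theorem s_starLiftEdge_inl (e : {e // Y.X.G.s e = y}) :
    X.X.G.s (starLiftEdge φ hp hpy (.inl e)) = p :=
  (φ.exists_pe_eq_of_s_eq hp (e.2.trans hpy.symm)).choose_spec.2

theorem t_starLiftEdge_inr (e : {e // Y.X.G.t e = y}) :
    X.X.G.t (starLiftEdge φ hp hpy (.inr e)) = p :=
  (φ.exists_pe_eq_of_t_eq hp (e.2.trans hpy.symm)).choose_spec.2

noncomputable def starLiftPoint :
    Option ({e // Y.X.G.s e = y} ⊕ {e // Y.X.G.t e = y}) → X.X.G.P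
  | none => p
  | some (.inl e) => X.X.G.t (starLiftEdge φ hp hpy (.inl e))
  | some (.inr e) => X.X.G.s (starLiftEdge φ hp hpy (.inr e))

noncomputable def starLift (hφ : Function.Injective (OHom.pe φ)) :
    starGraph Y y (hpy ▸ (φ.typeOf_pp p).trans hp) ⟶ X where
  f := { h := { pe := starLiftEdge φ hp hpy
                pp := starLiftPoint φ hp hpy
                hs := by
                  rintro (e | e)
                  exacts [s_starLiftEdge_inl φ hp hpy e, rfl]
                ht := by
                  rintro (e | e)
                  exacts [rfl, t_starLiftEdge_inr φ hp hpy e] }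
         comm_pp := by
           rintro (_ | e | e)
           · exact hp
           · exact TypedGraph.typeOf_t_eq_eps ((s_starLiftEdge_inl φ hp hpy e).symm ▸ hp)
           · exact TypedGraph.typeOf_s_eq_eps ((t_starLiftEdge_inr φ hp hpy e).symm ▸ hp)
         comm_pe := by
           rintro (e | e)
           · exact (φ.typeOf_pe _).symm.trans (congrArg _ (pe_starLiftEdge φ hp hpy (.inl e)))
           · exact (φ.typeOf_pe _).symm.trans (congrArg _ (pe_starLiftEdge φ hp hpy (.inr e))) }
  full := by
    rintro (_ | _) hv d hd
    · rcases hd with hd | hd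
      · exact ⟨.inl ⟨OHom.pe φ d, (φ.s_pe d).trans ((congrArg _ hd).trans hpy)⟩,
          hφ (pe_starLiftEdge φ hp hpy (.inl _)), .inl rfl⟩
      · exact ⟨.inr ⟨OHom.pe φ d, (φ.t_pe d).trans ((congrArg _ hd).trans hpy)⟩,
          hφ (pe_starLiftEdge φ hp hpy (.inr _)), .inr rfl⟩
    · cases hv

theorem pe_starLift_comp (hφ : Function.Injective (OHom.pe φ)) (e) :
    OHom.pe (starLift φ hp hpy hφ ≫ φ) e = Sum.elim Subtype.val Subtype.val e :=
  pe_starLiftEdge φ hp hpy e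

theorem pp_starLift_comp (hφ : Function.Injective (OHom.pe φ)) (q) :
    OHom.pp (starLift φ hp hpy hφ ≫ φ) q =
      q.elim y (Sum.elim (fun e => Y.X.G.t e.1) (fun e => Y.X.G.s e.1)) := by
  rcases q with _ | e | e
  · exact hpy
  · exact (φ.t_pe _).symm.trans (congrArg Y.X.G.t (pe_starLiftEdge φ hp hpy _))
  · exact (φ.s_pe _).symm.trans (congrArg Y.X.G.s (pe_starLiftEdge φ hp hpy _))

end StarLift

namespace OHom

variable {G H : OGraph}

theorem eq_of_mono_of_isEdgePoint (φ : G ⟶ H) [Mono φ] {p₁ p₂ : G.X.G.P}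
    (hp₁ : IsEdgePoint G p₁) (h : OHom.pp φ p₁ = OHom.pp φ p₂) : p₁ = p₂ := by
  have hp₂ : IsEdgePoint G p₂ := (typeOf_eq_of_pp_eq φ h).symm.trans hp₁
  have := (cancel_mono φ).1 <|
    show edgePointGraph.hom p₁ hp₁ ≫ φ = edgePointGraph.hom p₂ hp₂ ≫ φ
    from hom_ext (funext fun e => e.elim) (funext fun _ => h)
  exact congrArg (fun ψ => OHom.pp ψ ()) this

theorem pe_injective_of_mono (φ : G ⟶ H) [Mono φ] : Function.Injective (OHom.pe φ) := by
  intro d₁ d₂ h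
  rcases G.X.typeOf_s_eq_eps_or_typeOf_t_eq_eps d₁ with hs | ht
  · refine G.open_out _ hs d₁ d₂ rfl (eq_of_mono_of_isEdgePoint φ hs ?_).symm
    rw [← s_pe, ← s_pe, h]
  · refine G.open_in _ ht d₁ d₂ rfl (eq_of_mono_of_isEdgePoint φ ht ?_).symm
    rw [← t_pe, ← t_pe, h]

theorem pp_injective_of_mono (φ : G ⟶ H) [Mono φ] : Function.Injective (OHom.pp φ) := by
  intro p₁ p₂ h
  cases hp₁ : G.X.τ.pp p₁ with
  | eps => exact eq_of_mono_of_isEdgePoint φ hp₁ h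
  | V =>
    have hp₂ : G.X.τ.pp p₂ = .V := (typeOf_eq_of_pp_eq φ h).symm.trans hp₁
    have hφ := pe_injective_of_mono φ
    have := (cancel_mono φ).1 <|
      show starLift φ hp₁ rfl hφ ≫ φ = starLift φ hp₂ h.symm hφ ≫ φ
      from hom_ext (funext fun e => by rw [pe_starLift_comp, pe_starLift_comp])
        (funext fun q => by rw [pp_starLift_comp, pp_starLift_comp])
    exact congrArg (fun ψ => OHom.pp ψ none) this

theorem mono_iff_injective (φ : G ⟶ H) :
    Mono φ ↔ Function.Injective (OHom.pe φ) ∧ Function.Injective (OHom.pp φ) := by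
  refine ⟨fun _ => ⟨pe_injective_of_mono φ, pp_injective_of_mono φ⟩,
    fun ⟨hpe, hpp⟩ => ⟨?_⟩⟩
  intro K ψ χ h
  ext x
  exacts [hpe (congrArg (OHom.pe · x) h), hpp (congrArg (OHom.pp · x) h)]

end OHom

theorem Function.Injective.surjInv_apply_of_comm {α β γ δ : Sort*} {e : α → β}
    {m : γ → δ} (hm : Function.Injective m) (he : Function.Surjective e)
    {u : α → γ} {v : β → δ}
    (w : ∀ a, m (u a) = v (e a)) (a : α) : u (Function.surjInv he (e a)) = u a :=
  hm <| by rw [w, w, Function.surjInv_eq he]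

namespace OHom

variable {G H I Z W : OGraph}

theorem epi_of_surjective (φ : G ⟶ H) (hpe : Function.Surjective (OHom.pe φ))
    (hpp : Function.Surjective (OHom.pp φ)) : Epi φ := by
  refine ⟨fun {K} ψ χ h => ?_⟩
  ext x
  · obtain ⟨a, rfl⟩ := hpe x
    exact congrArg (OHom.pe · a) h
  · obtain ⟨a, rfl⟩ := hpp x
    exact congrArg (OHom.pp · a) h

section DiagonalLift

variable {e : G ⟶ I} {m : Z ⟶ W} [Mono m] {u : G ⟶ Z} {v : I ⟶ W}

theorem pe_surjInv_apply (hpe : Function.Surjective (OHom.pe e)) (w : u ≫ m = e ≫ v)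
    (a : G.X.G.E) : OHom.pe u (Function.surjInv hpe (OHom.pe e a)) = OHom.pe u a :=
  (pe_injective_of_mono m).surjInv_apply_of_comm hpe (fun a => congrArg (OHom.pe · a) w) a

theorem pp_surjInv_apply (hpp : Function.Surjective (OHom.pp e)) (w : u ≫ m = e ≫ v)
    (a : G.X.G.P) : OHom.pp u (Function.surjInv hpp (OHom.pp e a)) = OHom.pp u a :=
  (pp_injective_of_mono m).surjInv_apply_of_comm hpp (fun a => congrArg (OHom.pp · a) w) a

noncomputable def diagLift (hpe : Function.Surjective (OHom.pe e))
    (hpp : Function.Surjective (OHom.pp e)) (w : u ≫ m = e ≫ v) : I ⟶ Z where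
  f := { h := { pe := OHom.pe u ∘ Function.surjInv hpe
                pp := OHom.pp u ∘ Function.surjInv hpp
                hs := fun i => by
                  obtain ⟨a, rfl⟩ := hpe i
                  show Z.X.G.s (OHom.pe u (Function.surjInv hpe (OHom.pe e a))) =
                    OHom.pp u (Function.surjInv hpp (I.X.G.s (OHom.pe e a)))
                  rw [pe_surjInv_apply hpe w, e.s_pe, pp_surjInv_apply hpp w, u.s_pe]
                ht := fun i => by
                  obtain ⟨a, rfl⟩ := hpe i
                  show Z.X.G.t (OHom.pe u (Function.surjInv hpe (OHom.pe e a))) =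
                    OHom.pp u (Function.surjInv hpp (I.X.G.t (OHom.pe e a)))
                  rw [pe_surjInv_apply hpe w, e.t_pe, pp_surjInv_apply hpp w, u.t_pe] }
         comm_pp := fun i => (u.typeOf_pp _).trans <|
           (e.typeOf_pp _).symm.trans (congrArg _ (Function.surjInv_eq hpp i))
         comm_pe := fun i => (u.typeOf_pe _).trans <|
           (e.typeOf_pe _).symm.trans (congrArg _ (Function.surjInv_eq hpe i)) }
  full := u.full.of_comp_of_surjective (pe_surjInv_apply hpe w) (pp_surjInv_apply hpp w) hpp

theorem comp_diagLift (hpe : Function.Surjective (OHom.pe e))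
    (hpp : Function.Surjective (OHom.pp e)) (w : u ≫ m = e ≫ v) :
    e ≫ diagLift hpe hpp w = u := by
  ext a
  exacts [pe_surjInv_apply hpe w a, pp_surjInv_apply hpp w a]

theorem diagLift_comp (hpe : Function.Surjective (OHom.pe e))
    (hpp : Function.Surjective (OHom.pp e)) (w : u ≫ m = e ≫ v) :
    diagLift hpe hpp w ≫ m = v := by
  ext i
  · exact (congrArg (OHom.pe · _) w).trans (congrArg (OHom.pe v) (Function.surjInv_eq hpe i))
  · exact (congrArg (OHom.pp · _) w).trans (congrArg (OHom.pp v) (Function.surjInv_eq hpp i))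

end DiagonalLift

theorem strongEpi_of_surjective (e : G ⟶ I) (hpe : Function.Surjective (OHom.pe e))
    (hpp : Function.Surjective (OHom.pp e)) : StrongEpi e :=
  have := epi_of_surjective e hpe hpp
  StrongEpi.mk' fun _ _ _ _ _ _ sq =>
    .mk' ⟨diagLift hpe hpp sq.w, comp_diagLift hpe hpp sq.w, diagLift_comp hpe hpp sq.w⟩

end OHom

namespace OGraph

variable (H : OGraph) (E : Set H.X.G.E) (P : Set H.X.G.P) (hs : Set.MapsTo H.X.G.s E P)
  (ht : Set.MapsTo H.X.G.t E P)

def subgraph : OGraph where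
  X := { G := { E := E
                P := P
                s := hs.restrict
                t := ht.restrict }
         τ := { pe := fun d => H.X.τ.pe d
                pp := fun q => H.X.τ.pp q
                hs := fun d => H.X.τ.hs d
                ht := fun d => H.X.τ.ht d } }
  open_in q hq d₁ d₂ h₁ h₂ :=
    Subtype.ext (H.open_in q hq d₁ d₂ (congrArg Subtype.val h₁) (congrArg Subtype.val h₂))
  open_out q hq d₁ d₂ h₁ h₂ :=
    Subtype.ext (H.open_out q hq d₁ d₂ (congrArg Subtype.val h₁) (congrArg Subtype.val h₂))

def subgraphIncl : TypedHom (H.subgraph E P hs ht).X H.X where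
  h := { pe := Subtype.val
         pp := Subtype.val
         hs := fun _ => rfl
         ht := fun _ => rfl }
  comm_pp _ := rfl
  comm_pe _ := rfl

end OGraph

section Image

variable {G H : OGraph} (f : G ⟶ H)

def imageGraph : OGraph :=
  H.subgraph (Set.range (OHom.pe f)) (Set.range (OHom.pp f))
    (by rintro _ ⟨d, rfl⟩; exact ⟨_, (f.s_pe d).symm⟩)
    (by rintro _ ⟨d, rfl⟩; exact ⟨_, (f.t_pe d).symm⟩)

def imageFactor : G ⟶ imageGraph f where
  f := { h := { pe := Set.rangeFactorization (OHom.pe f)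
                pp := Set.rangeFactorization (OHom.pp f)
                hs := fun d => Subtype.ext (f.s_pe d)
                ht := fun d => Subtype.ext (f.t_pe d) }
         comm_pp := f.typeOf_pp
         comm_pe := f.typeOf_pe }
  full := f.full.of_comp_of_injective (m := OGraph.subgraphIncl ..) (fun _ => rfl) (fun _ => rfl)
    Subtype.val_injective

def imageι : imageGraph f ⟶ H where
  f := OGraph.subgraphIncl ..
  full := f.full.of_comp_of_surjective (e := (imageFactor f).f) (fun _ => rfl) (fun _ => rfl)
    Set.rangeFactorization_surjective

def strongEpiMonoFactorisation : StrongEpiMonoFactorisation f where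
  I := imageGraph f
  m := imageι f
  m_mono := (OHom.mono_iff_injective _).2 ⟨Subtype.val_injective, Subtype.val_injective⟩
  e := imageFactor f
  fac := rfl
  e_strong_epi := OHom.strongEpi_of_surjective _ Set.rangeFactorization_surjective
    Set.rangeFactorization_surjective

end Image

theorem CategoryTheory.Limits.exists_iso_of_strongEpi_mono {C : Type*} [Category C]
    {X Y I I' : C} {e : X ⟶ I} {m : I ⟶ Y} {e' : X ⟶ I'} {m' : I' ⟶ Y}
    [StrongEpi e] [Mono m] [StrongEpi e'] [Mono m'] (h : e ≫ m = e' ≫ m') :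
    ∃ φ : I ≅ I', e ≫ φ.hom = e' ∧ φ.hom ≫ m' = m :=
  let F : StrongEpiMonoFactorisation (e ≫ m) := ⟨⟨I, m, e, rfl⟩⟩
  let F' : StrongEpiMonoFactorisation (e ≫ m) := ⟨⟨I', m', e', h.symm⟩⟩
  let hF := F.toMonoIsImage
  let hF' := F'.toMonoIsImage
  ⟨hF.isoExt hF', hF.e_isoExt_hom hF', hF.isoExt_hom_m hF'⟩

/-- `OGraph` has unique strong epi–mono factorisations: every morphism factors as a
strong epimorphism followed by a monomorphism, uniquely up to isomorphism. -/
theorem ograph_strongEpi_mono_factorisation {G H : OGraph} (f : G ⟶ H) :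
    (∃ (I : OGraph) (e : G ⟶ I) (m : I ⟶ H),
        StrongEpi e ∧ Mono m ∧ e ≫ m = f) ∧
    (∀ (I I' : OGraph) (e : G ⟶ I) (m : I ⟶ H) (e' : G ⟶ I') (m' : I' ⟶ H),
        StrongEpi e → Mono m → e ≫ m = f →
        StrongEpi e' → Mono m' → e' ≫ m' = f →
        ∃ φ : I ≅ I', e ≫ φ.hom = e' ∧ φ.hom ≫ m' = m) := by
  let F := strongEpiMonoFactorisation f
  refine ⟨⟨F.I, F.e, F.m, F.e_strong_epi, F.m_mono, F.fac⟩, ?_⟩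
  intro I I' e m e' m' _ _ hfac _ _ hfac'
  exact exists_iso_of_strongEpi_mono (hfac.trans hfac'.symm)
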